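/- Suppose the fairness bound condition L_o · L_f · (W₁(ν_s⁰, ν_s¹) + δ_t⁰ + δ_t¹ + δ_s⁰ + δ_s¹ + 2Δ_ts) ≤ Γ⁰ holds, where Δ_ts = W₁(ν_t, ν_s), δ_t^g = W₁(ν_t^g, ν_t), δ_s^g = W₁(ν_s^g, ν_s), f : Z → Y is L_f-Lipschitz, and O is a class of L_o-Lipschitz bounded functions Y → ℝ. Then the target-domain group fairness measure Γ_UGF^t = sup_{o ∈ O} |E_{ν_t⁰}[o ∘ f] − E_{ν_t¹}[o ∘ f]| satisfies Γ_UGF^t ≤ Γ⁰. -/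

import Mathlib

open MeasureTheory
open scoped NNReal ENNReal

/-- The Wasserstein-1 (Kantorovich) distance between two measures on a metric
space, defined as the infimum of `∫ d(x,y) dπ` over all couplings `π`. -/
noncomputable def W1 {Z : Type*} [MetricSpace Z] [MeasurableSpace Z]
    (μ ν : Measure Z) : ℝ≥0∞ :=
  ⨅ π ∈ {π : Measure (Z × Z) | π.map Prod.fst = μ ∧ π.map Prod.snd = ν},
    ∫⁻ p, edist p.1 p.2 ∂π

/-- `μ` has a finite first moment (about some base point). -/
def FiniteFirstMoment {Z : Type*} [MetricSpace Z] [MeasurableSpace Z]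
    (μ : Measure Z) : Prop :=
  ∃ z₀ : Z, ∫⁻ z, edist z z₀ ∂μ ≠ ∞

/-!
For an `L`-Lipschitz integrable `g` and any coupling `π` of `μ` and `ν`,
`|∫ g dμ - ∫ g dν| = |∫ (g x - g y) dπ| ≤ L ∫ d(x, y) dπ`, so the gap is at most `L · W₁(μ, ν)`,
which is finite for probability measures with finite first moments. Applied to the
`L_o L_f`-Lipschitz function `o ∘ f` and routed through `ν_t`, this bounds the target-domain
gap by `L_o L_f (δ_t⁰ + δ_t¹)`, already at most the left-hand side of the fairness condition.
-/

namespace MeasureTheory.Measure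

variable {Z : Type*} [MeasurableSpace Z]

def IsCoupling (μ ν : Measure Z) (π : Measure (Z × Z)) : Prop :=
  π.map Prod.fst = μ ∧ π.map Prod.snd = ν

variable {μ ν : Measure Z} {π : Measure (Z × Z)}

lemma isCoupling_prod [IsProbabilityMeasure μ] [IsProbabilityMeasure ν] :
    IsCoupling μ ν (μ.prod ν) := by
  simp [IsCoupling]

lemma IsCoupling.lintegral_fst (h : IsCoupling μ ν π) {f : Z → ℝ≥0∞} (hf : Measurable f) :
    ∫⁻ p, f p.1 ∂π = ∫⁻ z, f z ∂μ := by
  rw [← h.1, lintegral_map hf measurable_fst]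

lemma IsCoupling.lintegral_snd (h : IsCoupling μ ν π) {f : Z → ℝ≥0∞} (hf : Measurable f) :
    ∫⁻ p, f p.2 ∂π = ∫⁻ z, f z ∂ν := by
  rw [← h.2, lintegral_map hf measurable_snd]

lemma IsCoupling.integral_sub_integral_eq {E : Type*} [NormedAddCommGroup E] [NormedSpace ℝ E]
    (h : IsCoupling μ ν π) {g : Z → E} (hμ : Integrable g μ) (hν : Integrable g ν) :
    ∫ z, g z ∂μ - ∫ z, g z ∂ν = ∫ p, (g p.1 - g p.2) ∂π := by
  rw [← h.1] at hμ
  rw [← h.2] at hν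
  rw [← h.1, ← h.2, integral_map measurable_fst.aemeasurable hμ.1,
    integral_map measurable_snd.aemeasurable hν.1]
  exact (integral_sub (hμ.comp_aemeasurable measurable_fst.aemeasurable)
    (hν.comp_aemeasurable measurable_snd.aemeasurable)).symm

end MeasureTheory.Measure

section

open Measure

variable {Z : Type*} [MetricSpace Z] [MeasurableSpace Z] {μ ν : Measure Z}

lemma W1_eq_iInf_isCoupling (μ ν : Measure Z) :
    W1 μ ν = ⨅ π ∈ {π | IsCoupling μ ν π}, ∫⁻ p, edist p.1 p.2 ∂π := rfl

lemma W1_le_lintegral_edist {π : Measure (Z × Z)} (h : IsCoupling μ ν π) :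
    W1 μ ν ≤ ∫⁻ p, edist p.1 p.2 ∂π :=
  biInf_le _ h

lemma W1_ne_top [OpensMeasurableSpace Z] [IsProbabilityMeasure μ] [IsProbabilityMeasure ν]
    (hμ : FiniteFirstMoment μ) (hν : FiniteFirstMoment ν) : W1 μ ν ≠ ∞ := by
  obtain ⟨z₀, h₀⟩ := hμ
  obtain ⟨z₁, h₁⟩ := hν
  have hπ : IsCoupling μ ν (μ.prod ν) := isCoupling_prod
  have hm₀ : Measurable fun z => edist z z₀ := (continuous_id.edist continuous_const).measurable
  have hm₁ : Measurable fun z => edist z z₁ := (continuous_id.edist continuous_const).measurable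
  have htriangle (p : Z × Z) : edist p.1 p.2 ≤ edist p.1 z₀ + edist z₀ z₁ + edist p.2 z₁ :=
    calc edist p.1 p.2 ≤ edist p.1 z₀ + edist z₀ z₁ + edist z₁ p.2 := edist_triangle4 _ _ _ _
      _ = _ := by rw [edist_comm z₁]
  have hm₁_snd : Measurable fun p : Z × Z => edist p.2 z₁ := hm₁.comp measurable_snd
  refine ne_top_of_le_ne_top ?_ ((W1_le_lintegral_edist hπ).trans (lintegral_mono htriangle))
  rw [lintegral_add_right _ hm₁_snd,
    lintegral_add_right _ measurable_const, hπ.lintegral_fst hm₀, hπ.lintegral_snd hm₁]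
  simp [h₀, h₁, edist_ne_top]

lemma enorm_integral_sub_le_mul_W1 {L : ℝ≥0} {g : Z → ℝ} (hg : LipschitzWith L g)
    (hμ : Integrable g μ) (hν : Integrable g ν) (hW : W1 μ ν ≠ ∞) :
    ‖∫ z, g z ∂μ - ∫ z, g z ∂ν‖ₑ ≤ L * W1 μ ν := by
  -- `L` may be `0`, so moving it inside the infimum needs some coupling to exist.
  have : Nonempty {π | IsCoupling μ ν π} := by
    by_contra hempty
    rw [not_nonempty_iff] at hempty
    exact hW (by rw [W1_eq_iInf_isCoupling, iInf_subtype']; exact iInf_of_empty _)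
  rw [W1_eq_iInf_isCoupling, iInf_subtype', ENNReal.mul_iInf (by simp)]
  refine le_iInf fun ⟨π, hπ⟩ => ?_
  calc ‖∫ z, g z ∂μ - ∫ z, g z ∂ν‖ₑ
      = ‖∫ p, (g p.1 - g p.2) ∂π‖ₑ := by rw [hπ.integral_sub_integral_eq hμ hν]
    _ ≤ ∫⁻ p, edist (g p.1) (g p.2) ∂π := by
        simpa only [edist_eq_enorm_sub] using enorm_integral_le_lintegral_enorm _
    _ ≤ ∫⁻ p, L * edist p.1 p.2 ∂π := lintegral_mono fun p => hg p.1 p.2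
    _ = L * ∫⁻ p, edist p.1 p.2 ∂π := lintegral_const_mul' _ _ ENNReal.coe_ne_top

lemma abs_integral_sub_le_mul_W1 {L : ℝ≥0} {g : Z → ℝ} (hg : LipschitzWith L g)
    (hμ : Integrable g μ) (hν : Integrable g ν) (hW : W1 μ ν ≠ ∞) :
    |∫ z, g z ∂μ - ∫ z, g z ∂ν| ≤ L * (W1 μ ν).toReal := by
  have h := ENNReal.toReal_mono (ENNReal.mul_ne_top ENNReal.coe_ne_top hW)
    (enorm_integral_sub_le_mul_W1 hg hμ hν hW)
  rwa [toReal_enorm, ENNReal.toReal_mul, ENNReal.coe_toReal, Real.norm_eq_abs] at h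

end

theorem fairness_preservation_general {Z Y : Type*} [MetricSpace Z] [MeasurableSpace Z]
    [OpensMeasurableSpace Z] [MetricSpace Y]
    (νt₀ νt₁ νs₀ νs₁ νt νs : Measure Z)
    [IsProbabilityMeasure νt₀] [IsProbabilityMeasure νt₁]
    [IsProbabilityMeasure νt]
    (ht₀ : FiniteFirstMoment νt₀) (ht₁ : FiniteFirstMoment νt₁)
    (ht : FiniteFirstMoment νt)
    (Lf Lo : ℝ≥0) (B : ℝ) (f : Z → Y) (hf : LipschitzWith Lf f)
    (Γ₀ : ℝ)
    (hcond : Lo * Lf * ((W1 νs₀ νs₁).toReal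
        + (W1 νt₀ νt).toReal + (W1 νt₁ νt).toReal
        + (W1 νs₀ νs).toReal + (W1 νs₁ νs).toReal
        + 2 * (W1 νt νs).toReal) ≤ Γ₀) :
    (⨆ o ∈ {o : Y → ℝ | LipschitzWith Lo o ∧ ∀ y, |o y| ≤ B},
        |∫ z, o (f z) ∂νt₀ - ∫ z, o (f z) ∂νt₁|) ≤ Γ₀ := by
  have hrest : 0 ≤ (W1 νs₀ νs₁).toReal + (W1 νs₀ νs).toReal + (W1 νs₁ νs).toReal
      + 2 * (W1 νt νs).toReal := by positivity
  have hbound : (Lo * Lf : ℝ) * ((W1 νt₀ νt).toReal + (W1 νt₁ νt).toReal) ≤ Γ₀ :=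
    le_trans (mul_le_mul_of_nonneg_left (by linarith) (by positivity)) hcond
  have hΓ₀ : 0 ≤ Γ₀ := le_trans (by positivity) hbound
  refine Real.iSup_le (fun o => Real.iSup_le (fun ⟨ho, hoB⟩ => ?_) hΓ₀) hΓ₀
  have hg : LipschitzWith (Lo * Lf) fun z => o (f z) := ho.comp hf
  have hint (μ : Measure Z) [IsFiniteMeasure μ] : Integrable (fun z => o (f z)) μ :=
    .of_bound hg.continuous.aestronglyMeasurable B (ae_of_all _ fun z => hoB (f z))
  have h₀ := abs_integral_sub_le_mul_W1 hg (hint νt₀) (hint νt) (W1_ne_top ht₀ ht)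
  have h₁ := abs_integral_sub_le_mul_W1 hg (hint νt₁) (hint νt) (W1_ne_top ht₁ ht)
  push_cast at h₀ h₁
  calc |∫ z, o (f z) ∂νt₀ - ∫ z, o (f z) ∂νt₁|
      ≤ |∫ z, o (f z) ∂νt₀ - ∫ z, o (f z) ∂νt| + |∫ z, o (f z) ∂νt₁ - ∫ z, o (f z) ∂νt| := by
        rw [abs_sub_comm (∫ z, o (f z) ∂νt₁)]; exact abs_sub_le _ _ _
    _ ≤ Γ₀ := by linarith

/-- fairness preservation.  If the Lipschitz-scaled bound
`L_o L_f (W₁(νs⁰,νs¹) + δ_t⁰ + δ_t¹ + δ_s⁰ + δ_s¹ + 2Δ_ts) ≤ Γ⁰` holds, then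
the target-domain UGF measure is at most `Γ⁰`. -/
theorem fairness_preservation {Z Y : Type*} [MetricSpace Z] [MeasurableSpace Z]
    [OpensMeasurableSpace Z] [MetricSpace Y]
    (νt₀ νt₁ νs₀ νs₁ νt νs : Measure Z)
    [IsProbabilityMeasure νt₀] [IsProbabilityMeasure νt₁]
    [IsProbabilityMeasure νs₀] [IsProbabilityMeasure νs₁]
    [IsProbabilityMeasure νt] [IsProbabilityMeasure νs]
    (ht₀ : FiniteFirstMoment νt₀) (ht₁ : FiniteFirstMoment νt₁)
    (hs₀ : FiniteFirstMoment νs₀) (hs₁ : FiniteFirstMoment νs₁)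
    (ht : FiniteFirstMoment νt) (hs : FiniteFirstMoment νs)
    (Lf Lo : ℝ≥0) (B : ℝ) (f : Z → Y) (hf : LipschitzWith Lf f)
    (Γ₀ : ℝ) (hΓ₀ : 0 ≤ Γ₀)
    (hcond : Lo * Lf * ((W1 νs₀ νs₁).toReal
        + (W1 νt₀ νt).toReal + (W1 νt₁ νt).toReal
        + (W1 νs₀ νs).toReal + (W1 νs₁ νs).toReal
        + 2 * (W1 νt νs).toReal) ≤ Γ₀) :
    (⨆ o ∈ {o : Y → ℝ | LipschitzWith Lo o ∧ ∀ y, |o y| ≤ B},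
        |∫ z, o (f z) ∂νt₀ - ∫ z, o (f z) ∂νt₁|) ≤ Γ₀ :=
  fairness_preservation_general νt₀ νt₁ νs₀ νs₁ νt νs ht₀ ht₁ ht Lf Lo B f hf Γ₀ hcond
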